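/- arXiv:2406.08419 — 3 statements merged into one kernel-verified Lean document; each statement's English description precedes it below -/
import Mathlib

section
/- Let Y(1), D(0), D(1) be random variables on a discrete probability space with D(0), D(1) ∈ {0,1} and P(D(0) ≤ D(1)) = 1. Suppose P(D(1)=1) > 0 and P(D(0)=1) > 0 and P(D(1)=1) > P(D(0)=1). Then the law of Y(1) conditional on {D(1)=1} equals the mixture: P(Y(1)∈B | D(1)=1) · P(D(1)=1) = P(Y(1)∈B | D(1)=1, D(0)=0) · (P(D(1)=1) − P(D(0)=1)) + P(Y(1)∈B | D(0)=1) · P(D(0)=1) for every measurable set B. Consequently, the conditional law of Y(1) given the complier event {D(1)=1, D(0)=0} is identified as [P(Y(1)∈B | D(1)=1)·P(D(1)=1) − P(Y(1)∈B | D(0)=1)·P(D(0)=1)] / (P(D(1)=1) − P(D(0)=1)). -/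
open MeasureTheory ProbabilityTheory

/-- Elementary conditional probability `P(A | B)` as a real number. -/
noncomputable def condP {Ω : Type*} [MeasurableSpace Ω] (μ : Measure Ω) (A B : Set Ω) : ℝ :=
  (μ (A ∩ B)).toReal / (μ B).toReal

lemma condP_mul {Ω : Type*} [MeasurableSpace Ω] (μ : Measure Ω) (A B : Set Ω)
    (h : (μ B).toReal ≠ 0) : condP μ A B * (μ B).toReal = (μ (A ∩ B)).toReal := by
  rw [condP, div_mul_cancel₀ _ h]

/-- On a discrete probability space, under monotonicity (no defiers), the conditional law of
`Y(1)` given `{D(1)=1}` is the mixture of the complier and always-taker conditional laws, and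
consequently the complier conditional law of `Y(1)` is identified. -/
theorem complier_law_identified
    {Ω : Type*} [MeasurableSpace Ω] [MeasurableSingletonClass Ω] [Countable Ω]
    (μ : Measure Ω) [IsProbabilityMeasure μ]
    (Y1 : Ω → ℝ) (D0 D1 : Ω → ℕ)
    (hbin0 : ∀ ω, D0 ω ≤ 1) (hbin1 : ∀ ω, D1 ω ≤ 1)
    (hmono : μ {ω | D0 ω ≤ D1 ω} = 1)
    (h1 : 0 < (μ {ω | D1 ω = 1}).toReal)
    (h0 : 0 < (μ {ω | D0 ω = 1}).toReal)
    (hlt : (μ {ω | D0 ω = 1}).toReal < (μ {ω | D1 ω = 1}).toReal) :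
    ∀ B : Set ℝ, MeasurableSet B →
      (condP μ {ω | Y1 ω ∈ B} {ω | D1 ω = 1} * (μ {ω | D1 ω = 1}).toReal
        = condP μ {ω | Y1 ω ∈ B} {ω | D1 ω = 1 ∧ D0 ω = 0} *
            ((μ {ω | D1 ω = 1}).toReal - (μ {ω | D0 ω = 1}).toReal)
          + condP μ {ω | Y1 ω ∈ B} {ω | D0 ω = 1} * (μ {ω | D0 ω = 1}).toReal) ∧
      condP μ {ω | Y1 ω ∈ B} {ω | D1 ω = 1 ∧ D0 ω = 0}
        = (condP μ {ω | Y1 ω ∈ B} {ω | D1 ω = 1} * (μ {ω | D1 ω = 1}).toReal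
            - condP μ {ω | Y1 ω ∈ B} {ω | D0 ω = 1} * (μ {ω | D0 ω = 1}).toReal)
          / ((μ {ω | D1 ω = 1}).toReal - (μ {ω | D0 ω = 1}).toReal) := by
  -- the defier set is null
  have hN : μ {ω | ¬ D0 ω ≤ D1 ω} = 0 := by
    have := prob_compl_eq_zero_iff (μ := μ) (s := {ω | D0 ω ≤ D1 ω})
      (MeasurableSet.of_discrete)
    have h := this.mpr hmono
    simpa [Set.compl_setOf] using h
  -- key decomposition for any set A
  have key : ∀ A : Set Ω,
      μ (A ∩ {ω | D1 ω = 1}) = μ (A ∩ {ω | D1 ω = 1 ∧ D0 ω = 0}) + μ (A ∩ {ω | D0 ω = 1}) := by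
    intro A
    have hsplit : A ∩ {ω | D1 ω = 1} =
        (A ∩ {ω | D1 ω = 1 ∧ D0 ω = 0}) ∪ (A ∩ {ω | D1 ω = 1 ∧ D0 ω = 1}) := by
      ext ω
      rcases Nat.le_one_iff_eq_zero_or_eq_one.mp (hbin0 ω) with h | h <;>
        simp [Set.mem_inter_iff, Set.mem_setOf_eq, h]
    have hdisj : Disjoint (A ∩ {ω | D1 ω = 1 ∧ D0 ω = 0}) (A ∩ {ω | D1 ω = 1 ∧ D0 ω = 1}) := by
      rw [Set.disjoint_left]
      rintro ω ⟨-, -, h0'⟩ ⟨-, -, h1'⟩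
      omega
    have hmeas : MeasurableSet (A ∩ {ω | D1 ω = 1 ∧ D0 ω = 1}) := MeasurableSet.of_discrete
    rw [hsplit, measure_union hdisj hmeas]
    congr 1
    -- μ (A ∩ {D1=1 ∧ D0=1}) = μ (A ∩ {D0=1})
    have h1sub : A ∩ {ω | D1 ω = 1 ∧ D0 ω = 1} ⊆ A ∩ {ω | D0 ω = 1} := by
      rintro ω ⟨hA, h1', h0'⟩; exact ⟨hA, h0'⟩
    have hdiffnull : μ ((A ∩ {ω | D0 ω = 1}) \ (A ∩ {ω | D1 ω = 1 ∧ D0 ω = 1})) = 0 := by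
      refine measure_mono_null ?_ hN
      rintro ω ⟨⟨hA, h0'⟩, hnot⟩
      simp only [Set.mem_setOf_eq] at *
      intro hle
      exact hnot ⟨hA, by have := hbin1 ω; omega, h0'⟩
    calc μ (A ∩ {ω | D1 ω = 1 ∧ D0 ω = 1})
        = μ (A ∩ {ω | D1 ω = 1 ∧ D0 ω = 1}) +
            μ ((A ∩ {ω | D0 ω = 1}) \ (A ∩ {ω | D1 ω = 1 ∧ D0 ω = 1})) := by
          rw [hdiffnull, add_zero]
      _ = μ (A ∩ {ω | D0 ω = 1}) := by
          rw [measure_add_diff MeasurableSet.of_discrete.nullMeasurableSet,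
            Set.union_eq_self_of_subset_left h1sub]
  -- measures are finite
  have hfin : ∀ S : Set Ω, μ S ≠ ⊤ := fun S => measure_ne_top μ S
  -- toReal versions
  have keyR : ∀ A : Set Ω,
      (μ (A ∩ {ω | D1 ω = 1})).toReal =
        (μ (A ∩ {ω | D1 ω = 1 ∧ D0 ω = 0})).toReal + (μ (A ∩ {ω | D0 ω = 1})).toReal := by
    intro A
    rw [key A, ENNReal.toReal_add (hfin _) (hfin _)]
  -- applying key to univ
  have hudec : (μ {ω | D1 ω = 1}).toReal =
      (μ {ω | D1 ω = 1 ∧ D0 ω = 0}).toReal + (μ {ω | D0 ω = 1}).toReal := by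
    have := keyR Set.univ
    simpa using this
  have hcompl : (μ {ω | D1 ω = 1 ∧ D0 ω = 0}).toReal =
      (μ {ω | D1 ω = 1}).toReal - (μ {ω | D0 ω = 1}).toReal := by linarith
  have hcpos : 0 < (μ {ω | D1 ω = 1 ∧ D0 ω = 0}).toReal := by
    rw [hcompl]; linarith
  intro B hB
  set A : Set Ω := {ω | Y1 ω ∈ B}
  have e1 := condP_mul μ A {ω | D1 ω = 1} h1.ne'
  have e0 := condP_mul μ A {ω | D0 ω = 1} h0.ne'
  have ec := condP_mul μ A {ω | D1 ω = 1 ∧ D0 ω = 0} hcpos.ne'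
  have main : condP μ A {ω | D1 ω = 1} * (μ {ω | D1 ω = 1}).toReal
      = condP μ A {ω | D1 ω = 1 ∧ D0 ω = 0} *
          ((μ {ω | D1 ω = 1}).toReal - (μ {ω | D0 ω = 1}).toReal)
        + condP μ A {ω | D0 ω = 1} * (μ {ω | D0 ω = 1}).toReal := by
    rw [e1, ← hcompl, ec, e0]
    exact keyR A
  refine ⟨main, ?_⟩
  have hd : (μ {ω | D1 ω = 1}).toReal - (μ {ω | D0 ω = 1}).toReal ≠ 0 := by linarith
  rw [main, add_sub_cancel_right, mul_div_cancel_right₀ _ hd]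
end

section
/- Let Y(0), Y(1) be random variables with Y(d) ∈ [Y_L, Y_H] almost surely for d ∈ {0,1}, and let D(0), D(1) ∈ {0,1} be random variables, all integrable. Then E[Y(1) − Y(0)] lies in the interval [θ_L, θ_H], where θ_L = E[Y(1)D(1) + Y_L(1−D(1))] − E[Y(0)(1−D(0)) + Y_H D(0)] and θ_H = E[Y(1)D(1) + Y_H(1−D(1))] − E[Y(0)(1−D(0)) + Y_L D(0)]. -/
open MeasureTheory

/-- Manski-type bounds: the average treatment effect `E[Y(1) − Y(0)]` lies between the lower
and upper bounds obtained by replacing unobserved potential outcomes by `Y_L` and `Y_H`. -/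
theorem ate_in_manski_bounds
    {Ω : Type*} [MeasurableSpace Ω] (μ : Measure Ω) [IsProbabilityMeasure μ]
    (YL YH : ℝ) (Y0 Y1 D0 D1 : Ω → ℝ)
    (hY0m : Measurable Y0) (hY1m : Measurable Y1)
    (hD0m : Measurable D0) (hD1m : Measurable D1)
    (hY0b : ∀ᵐ ω ∂μ, Y0 ω ∈ Set.Icc YL YH) (hY1b : ∀ᵐ ω ∂μ, Y1 ω ∈ Set.Icc YL YH)
    (hD0b : ∀ ω, D0 ω = 0 ∨ D0 ω = 1) (hD1b : ∀ ω, D1 ω = 0 ∨ D1 ω = 1)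
    (hint0 : Integrable Y0 μ) (hint1 : Integrable Y1 μ) :
    ((∫ ω, (Y1 ω * D1 ω + YL * (1 - D1 ω)) ∂μ)
        - ∫ ω, (Y0 ω * (1 - D0 ω) + YH * D0 ω) ∂μ)
      ≤ ∫ ω, (Y1 ω - Y0 ω) ∂μ ∧
    (∫ ω, (Y1 ω - Y0 ω) ∂μ)
      ≤ ((∫ ω, (Y1 ω * D1 ω + YH * (1 - D1 ω)) ∂μ)
          - ∫ ω, (Y0 ω * (1 - D0 ω) + YL * D0 ω) ∂μ) := by
  have key : ∀ (c : ℝ) (Y D : Ω → ℝ), Measurable Y → Measurable D →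
      (∀ ω, D ω = 0 ∨ D ω = 1) → Integrable Y μ →
      Integrable (fun ω => Y ω * D ω + c * (1 - D ω)) μ := by
    intro c Y D hYm hDm hDb hY
    refine Integrable.mono' (hY.abs.add (integrable_const |c|))
      ((hYm.mul hDm).add (measurable_const.mul (measurable_const.sub hDm))).aestronglyMeasurable
      (Filter.Eventually.of_forall fun ω => ?_)
    rcases hDb ω with h | h <;> simp [h, abs_nonneg]
  have i1L : Integrable (fun ω => Y1 ω * D1 ω + YL * (1 - D1 ω)) μ :=
    key YL Y1 D1 hY1m hD1m hD1b hint1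
  have i1H : Integrable (fun ω => Y1 ω * D1 ω + YH * (1 - D1 ω)) μ :=
    key YH Y1 D1 hY1m hD1m hD1b hint1
  have hD0b' : ∀ ω, (1 : ℝ) - D0 ω = 0 ∨ (1 : ℝ) - D0 ω = 1 := by
    intro ω; rcases hD0b ω with h | h <;> simp [h]
  have i0H : Integrable (fun ω => Y0 ω * (1 - D0 ω) + YH * D0 ω) μ := by
    have := key YH Y0 (fun ω => 1 - D0 ω) hY0m (measurable_const.sub hD0m) hD0b' hint0
    simpa using this
  have i0L : Integrable (fun ω => Y0 ω * (1 - D0 ω) + YL * D0 ω) μ := by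
    have := key YL Y0 (fun ω => 1 - D0 ω) hY0m (measurable_const.sub hD0m) hD0b' hint0
    simpa using this
  have e : ∫ ω, (Y1 ω - Y0 ω) ∂μ = (∫ ω, Y1 ω ∂μ) - ∫ ω, Y0 ω ∂μ :=
    integral_sub hint1 hint0
  have m1L : ∫ ω, (Y1 ω * D1 ω + YL * (1 - D1 ω)) ∂μ ≤ ∫ ω, Y1 ω ∂μ := by
    refine integral_mono_ae i1L hint1 ?_
    filter_upwards [hY1b] with ω hb
    rcases hD1b ω with h | h <;> simp [h, hb.1]
  have m1H : ∫ ω, Y1 ω ∂μ ≤ ∫ ω, (Y1 ω * D1 ω + YH * (1 - D1 ω)) ∂μ := by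
    refine integral_mono_ae hint1 i1H ?_
    filter_upwards [hY1b] with ω hb
    rcases hD1b ω with h | h <;> simp [h, hb.2]
  have m0H : ∫ ω, Y0 ω ∂μ ≤ ∫ ω, (Y0 ω * (1 - D0 ω) + YH * D0 ω) ∂μ := by
    refine integral_mono_ae hint0 i0H ?_
    filter_upwards [hY0b] with ω hb
    rcases hD0b ω with h | h <;> simp [h, hb.2]
  have m0L : ∫ ω, (Y0 ω * (1 - D0 ω) + YL * D0 ω) ∂μ ≤ ∫ ω, Y0 ω ∂μ := by
    refine integral_mono_ae i0L hint0 ?_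
    filter_upwards [hY0b] with ω hb
    rcases hD0b ω with h | h <;> simp [h, hb.1]
  rw [e]
  exact ⟨sub_le_sub m1L m0H, sub_le_sub m1H m0L⟩
end

section
/- Let Y(0), Y(1) ∈ [Y_L, Y_H] a.s., D(0), D(1) ∈ {0,1}, A ∈ {0,1} with (Y(0),Y(1),D(0),D(1)) ⊥ A given S for a finitely-valued S, and G = E[(D(1)−D(0))A + D(0)] > 0. Define υ = E[Y(1) − Y(0) | D = 1] where D = D(1)A + D(0)(1−A). Then G·υ = E[(Y(1)−Y(0))(D(1)−D(0))A + (Y(1)−Y(0))D(0)], and consequently υ ∈ [υ_L, υ_H] where G·υ_L = E[(Y(1)−Y(0))(D(1)−D(0))A + (Y(1)−Y_H)D(0)] and G·υ_H = E[(Y(1)−Y(0))(D(1)−D(0))A + (Y(1)−Y_L)D(0)]. -/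
/-!
Since `D = (D(1) − D(0))A + D(0)` only takes the values `0` and `1`, it is the indicator of
`{D = 1}`; hence `G = P(D = 1)` and `G · E[X | D = 1] = E[X D]` for every `X`. Expanding
`(Y(1) − Y(0))D` gives the identity. Replacing `Y(0)` by a constant `c` in the always-taker
term adds `E[(Y(0) − c) D(0)]` to the right-hand side; as `D(0) ≥ 0` and `Y_L ≤ Y(0) ≤ Y_H`,
this is `≤ 0` for `c = Y_H` and `≥ 0` for `c = Y_L`, which gives the two bounds.
-/

open MeasureTheory ProbabilityTheory

section

variable {Ω : Type*} [MeasurableSpace Ω] {μ : Measure Ω}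

theorem measureReal_mul_integral_cond [IsFiniteMeasure μ] (s : Set Ω) (X : Ω → ℝ) :
    μ.real s * ∫ ω, X ω ∂μ[|s] = ∫ ω in s, X ω ∂μ := by
  rw [ProbabilityTheory.cond, integral_smul_measure, smul_eq_mul, ENNReal.toReal_inv, ← mul_assoc]
  by_cases hs : μ.real s = 0
  · rw [Measure.restrict_eq_zero.mpr ((measureReal_eq_zero_iff (measure_ne_top μ s)).1 hs)]
    simp
  · rw [← measureReal_def, mul_inv_cancel₀ hs, one_mul]

theorem setIntegral_eq_integral_mul_of_zero_or_one {f : Ω → ℝ} (hf : Measurable f)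
    (hf01 : ∀ ω, f ω = 0 ∨ f ω = 1) (X : Ω → ℝ) :
    ∫ ω in {ω | f ω = 1}, X ω ∂μ = ∫ ω, X ω * f ω ∂μ := by
  rw [← integral_indicator (measurableSet_eq_fun hf measurable_const)]
  congr with ω
  rcases hf01 ω with h | h <;> simp [Set.indicator, h]

theorem integral_mul_integral_cond_eq_integral_mul [IsFiniteMeasure μ] {f : Ω → ℝ}
    (hf : Measurable f) (hf01 : ∀ ω, f ω = 0 ∨ f ω = 1) (X : Ω → ℝ) :
    (∫ ω, f ω ∂μ) * ∫ ω, X ω ∂μ[|{ω | f ω = 1}] = ∫ ω, X ω * f ω ∂μ := by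
  have hf_int : ∫ ω, f ω ∂μ = μ.real {ω | f ω = 1} := by
    simpa using (setIntegral_eq_integral_mul_of_zero_or_one (μ := μ) hf hf01 1).symm
  rw [hf_int, measureReal_mul_integral_cond, setIntegral_eq_integral_mul_of_zero_or_one hf hf01]

theorem MeasureTheory.Integrable.mul_of_zero_or_one {X f : Ω → ℝ} (hX : Integrable X μ)
    (hf : Measurable f) (hf01 : ∀ ω, f ω = 0 ∨ f ω = 1) : Integrable (fun ω => X ω * f ω) μ :=
  hX.mul_bdd (c := 1) hf.aestronglyMeasurable <| ae_of_all _ fun ω => by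
    rcases hf01 ω with h | h <;> simp [h]

end

theorem att_bounds_general
    {Ω : Type*} [MeasurableSpace Ω]
    (μ : Measure Ω) [IsProbabilityMeasure μ]
    (YL YH : ℝ) (Y0 Y1 D0 D1 A : Ω → ℝ)
    (hmY0 : Measurable Y0) (hmY1 : Measurable Y1) (hmD0 : Measurable D0)
    (hmD1 : Measurable D1) (hmA : Measurable A)
    (hY0b : ∀ᵐ ω ∂μ, Y0 ω ∈ Set.Icc YL YH) (hY1b : ∀ᵐ ω ∂μ, Y1 ω ∈ Set.Icc YL YH)
    (hD0b : ∀ ω, D0 ω = 0 ∨ D0 ω = 1) (hD1b : ∀ ω, D1 ω = 0 ∨ D1 ω = 1)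
    (hAb : ∀ ω, A ω = 0 ∨ A ω = 1)
    (D : Ω → ℝ) (hD : D = fun ω => D1 ω * A ω + D0 ω * (1 - A ω))
    (G : ℝ) (hG : G = ∫ ω, ((D1 ω - D0 ω) * A ω + D0 ω) ∂μ) (hGpos : 0 < G) :
    G * ∫ ω, (Y1 ω - Y0 ω) ∂(μ[|{ω | D ω = 1}])
        = ∫ ω, ((Y1 ω - Y0 ω) * (D1 ω - D0 ω) * A ω + (Y1 ω - Y0 ω) * D0 ω) ∂μ ∧
    (∫ ω, ((Y1 ω - Y0 ω) * (D1 ω - D0 ω) * A ω + (Y1 ω - YH) * D0 ω) ∂μ) / G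
        ≤ ∫ ω, (Y1 ω - Y0 ω) ∂(μ[|{ω | D ω = 1}]) ∧
    (∫ ω, (Y1 ω - Y0 ω) ∂(μ[|{ω | D ω = 1}]))
        ≤ (∫ ω, ((Y1 ω - Y0 ω) * (D1 ω - D0 ω) * A ω + (Y1 ω - YL) * D0 ω) ∂μ) / G := by
  have hD_eq : ∀ ω, D ω = (D1 ω - D0 ω) * A ω + D0 ω := fun ω => by rw [hD]; ring
  have hD01 : ∀ ω, D ω = 0 ∨ D ω = 1 := fun ω => by
    rcases hAb ω with h | h <;> simp [hD, h, hD0b ω, hD1b ω]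
  have hmD : Measurable D := hD ▸ by fun_prop
  have hY0 : Integrable Y0 μ := .of_mem_Icc YL YH hmY0.aemeasurable hY0b
  have hY1 : Integrable Y1 μ := .of_mem_Icc YL YH hmY1.aemeasurable hY1b
  have hGυ : G * ∫ ω, (Y1 ω - Y0 ω) ∂(μ[|{ω | D ω = 1}]) = ∫ ω, (Y1 ω - Y0 ω) * D ω ∂μ := by
    simp only [hG, ← hD_eq]
    exact integral_mul_integral_cond_eq_integral_mul hmD hD01 _
  have hreplace : ∀ c : ℝ,
      ∫ ω, ((Y1 ω - Y0 ω) * (D1 ω - D0 ω) * A ω + (Y1 ω - c) * D0 ω) ∂μ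
        = ∫ ω, (Y1 ω - Y0 ω) * D ω ∂μ + ∫ ω, (Y0 ω - c) * D0 ω ∂μ := fun c => by
    have hint_D : Integrable (fun ω => (Y1 ω - Y0 ω) * D ω) μ :=
      (hY1.sub hY0).mul_of_zero_or_one hmD hD01
    have hint_D0 : Integrable (fun ω => (Y0 ω - c) * D0 ω) μ :=
      (hY0.sub (integrable_const c)).mul_of_zero_or_one hmD0 hD0b
    rw [← integral_add hint_D hint_D0]
    congr with ω
    rw [hD_eq]
    ring
  have hD0_nonneg : ∀ ω, 0 ≤ D0 ω := fun ω => by rcases hD0b ω with h | h <;> simp [h]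
  have hYH : ∫ ω, (Y0 ω - YH) * D0 ω ∂μ ≤ 0 := integral_nonpos_of_ae <| hY0b.mono fun ω hω =>
    mul_nonpos_of_nonpos_of_nonneg (by linarith [hω.2]) (hD0_nonneg ω)
  have hYL : 0 ≤ ∫ ω, (Y0 ω - YL) * D0 ω ∂μ := integral_nonneg_of_ae <| hY0b.mono fun ω hω =>
    mul_nonneg (by linarith [hω.1]) (hD0_nonneg ω)
  exact ⟨hGυ.trans (integral_congr_ae (ae_of_all μ fun ω => by simp only [hD_eq]; ring)),
    by rw [div_le_iff₀ hGpos, hreplace]; linarith, by rw [le_div_iff₀ hGpos, hreplace]; linarith⟩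

/-- The ATT `υ = E[Y(1) − Y(0) | D = 1]` satisfies
`G·υ = E[(Y(1)−Y(0))(D(1)−D(0))A + (Y(1)−Y(0))D(0)]`, and consequently lies between the
bounds obtained by replacing `Y(0)` on the always-taker event `{D(0)=1}` by `Y_H` and
`Y_L`. -/
theorem att_bounds
    {Ω 𝒮 : Type*} [MeasurableSpace Ω] [Fintype 𝒮]
    (μ : Measure Ω) [IsProbabilityMeasure μ]
    (YL YH : ℝ) (Y0 Y1 D0 D1 A : Ω → ℝ) (S : Ω → 𝒮)
    (hmY0 : Measurable Y0) (hmY1 : Measurable Y1) (hmD0 : Measurable D0)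
    (hmD1 : Measurable D1) (hmA : Measurable A)
    (hSmeas : ∀ s : 𝒮, MeasurableSet {ω | S ω = s})
    (hY0b : ∀ᵐ ω ∂μ, Y0 ω ∈ Set.Icc YL YH) (hY1b : ∀ᵐ ω ∂μ, Y1 ω ∈ Set.Icc YL YH)
    (hD0b : ∀ ω, D0 ω = 0 ∨ D0 ω = 1) (hD1b : ∀ ω, D1 ω = 0 ∨ D1 ω = 1)
    (hAb : ∀ ω, A ω = 0 ∨ A ω = 1)
    (hindep : ∀ (s : 𝒮) (B : Set (ℝ × ℝ × ℝ × ℝ)), MeasurableSet B → ∀ a : ℝ,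
      μ ({ω | (Y0 ω, Y1 ω, D0 ω, D1 ω) ∈ B} ∩ {ω | A ω = a} ∩ {ω | S ω = s})
          * μ {ω | S ω = s}
        = μ ({ω | (Y0 ω, Y1 ω, D0 ω, D1 ω) ∈ B} ∩ {ω | S ω = s})
            * μ ({ω | A ω = a} ∩ {ω | S ω = s}))
    (D : Ω → ℝ) (hD : D = fun ω => D1 ω * A ω + D0 ω * (1 - A ω))
    (G : ℝ) (hG : G = ∫ ω, ((D1 ω - D0 ω) * A ω + D0 ω) ∂μ) (hGpos : 0 < G) :
    G * ∫ ω, (Y1 ω - Y0 ω) ∂(μ[|{ω | D ω = 1}])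
        = ∫ ω, ((Y1 ω - Y0 ω) * (D1 ω - D0 ω) * A ω + (Y1 ω - Y0 ω) * D0 ω) ∂μ ∧
    (∫ ω, ((Y1 ω - Y0 ω) * (D1 ω - D0 ω) * A ω + (Y1 ω - YH) * D0 ω) ∂μ) / G
        ≤ ∫ ω, (Y1 ω - Y0 ω) ∂(μ[|{ω | D ω = 1}]) ∧
    (∫ ω, (Y1 ω - Y0 ω) ∂(μ[|{ω | D ω = 1}]))
        ≤ (∫ ω, ((Y1 ω - Y0 ω) * (D1 ω - D0 ω) * A ω + (Y1 ω - YL) * D0 ω) ∂μ) / G :=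
  att_bounds_general μ YL YH Y0 Y1 D0 D1 A hmY0 hmY1 hmD0 hmD1 hmA hY0b hY1b hD0b hD1b hAb D hD G hG
    hGpos
end
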